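/- arXiv:1110.6335 — 3 statements merged into one kernel-verified Lean document; each statement's English description precedes it below -/
import Mathlib

section
/- Let 𝔲(2) be the real Lie algebra of skew-adjoint 2×2 complex matrices, let k̄ = ℝ·F where F = [[0,0],[0,i]], and let K̄ = {[[1,0],[0,z]] : z ∈ ℂ, |z| = 1} ⊆ U(2). Set E₁ = [[0,1],[−1,0]], E₂ = [[0,i],[i,0]], E₃ = [[i,0],[0,−i]]. Then a real subspace m′ ⊆ 𝔲(2) satisfies 𝔲(2) = m′ ⊕ k̄ together with k m′ k⁻¹ ⊆ m′ for every k ∈ K̄ if and only if there exists a (unique) λ ∈ ℝ such that m′ = span_ℝ{E₁, E₂, E₃ + λF}. In other words, the reductive complements of k̄ in 𝔲(2) with respect to K̄ are exhausted by the one-parameter family m̄_λ = span_ℝ{E₁, E₂, E₃ + λF}, λ ∈ ℝ. -/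
/-
Conjugation by `σ = diag(1, -1) ∈ K̄` fixes `k̄ = ℝ F` pointwise and negates the off-diagonal
matrices `E₁, E₂`. If `m′` is a `σ`-stable complement of `k̄` and an off-diagonal `E` is written
`E = Y + tF` with `Y ∈ m′`, then `Y + σYσ⁻¹ = -2tF ∈ m′ ∩ k̄ = 0`, so `E ∈ m′`. Writing
`E₃ = Y - λF` gives `E₃ + λF ∈ m′`; hence `m̄_λ ≤ m′`, and as both complement `k̄` they are equal
(modular law). Conversely, `m̄_λ = {X ∈ 𝔲(2) | Im X₀₀ + Im X₁₁ = λ Im X₀₀}` is cut out by a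
condition on the diagonal entries only, which conjugation by `diag(1, z)` does not change; the same
description gives `m̄_λ ∩ k̄ = 0`, `m̄_λ + k̄ = 𝔲(2)` and the injectivity of `λ ↦ m̄_λ`.
-/

open Complex

noncomputable def u2 : Submodule ℝ (Matrix (Fin 2) (Fin 2) ℂ) :=
  skewAdjoint.submodule ℝ (Matrix (Fin 2) (Fin 2) ℂ)

theorem Submodule.mem_left_of_mem_sup_of_apply_eq_neg {K M : Type*} [DivisionRing K] [CharZero K]
    [AddCommGroup M] [Module K M] {m p : Submodule K M} (T : M →ₗ[K] M)
    (hm : ∀ y ∈ m, T y ∈ m) (hp : ∀ y ∈ p, T y = y) (hmp : m ⊓ p = ⊥) {x : M}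
    (hx : x ∈ m ⊔ p) (hTx : T x = -x) : x ∈ m := by
  obtain ⟨y, hy, k, hk, rfl⟩ := Submodule.mem_sup.mp hx
  have hTy : T y = -(y + k) - k :=
    eq_sub_of_add_eq (by simpa [hp k hk] using (map_add T y k).symm.trans hTx)
  have h2k : (2 : K) • k ∈ m ⊓ p := by
    refine ⟨?_, p.smul_mem 2 hk⟩
    have h2k_eq : (2 : K) • k = -(y + T y) := by rw [hTy, two_smul]; abel
    exact h2k_eq ▸ m.neg_mem (m.add_mem hy (hm y hy))
  rw [hmp, Submodule.mem_bot, smul_eq_zero] at h2k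
  simpa [h2k.resolve_left two_ne_zero] using hy

open Matrix

local notation "E₁" => (!![0, 1; -1, 0] : Matrix (Fin 2) (Fin 2) ℂ)
local notation "E₂" => (!![0, I; I, 0] : Matrix (Fin 2) (Fin 2) ℂ)
local notation "E₃" => (!![I, 0; 0, -I] : Matrix (Fin 2) (Fin 2) ℂ)
local notation "F" => (!![0, 0; 0, I] : Matrix (Fin 2) (Fin 2) ℂ)

noncomputable def mbar (lam : ℝ) : Submodule ℝ (Matrix (Fin 2) (Fin 2) ℂ) :=
  Submodule.span ℝ {E₁, E₂, E₃ + lam • F}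

theorem inv_diag_one {R : Type*} [Field R] {z : R} (hz : z ≠ 0) :
    (!![1, 0; 0, z] : Matrix (Fin 2) (Fin 2) R)⁻¹ = !![1, 0; 0, z⁻¹] :=
  inv_eq_left_inv (by simp [inv_mul_cancel₀ hz, one_fin_two])

theorem diag_one_mul_mul_inv {R : Type*} [Field R] {z : R} (hz : z ≠ 0)
    (X : Matrix (Fin 2) (Fin 2) R) :
    !![1, 0; 0, z] * X * !![1, 0; 0, z]⁻¹ = !![X 0 0, X 0 1 * z⁻¹; z * X 1 0, X 1 1] := by
  rw [inv_diag_one hz, eta_fin_two X]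
  simp [mul_inv_cancel_right₀ hz, mul_comm z]

theorem mem_u2_iff {X : Matrix (Fin 2) (Fin 2) ℂ} : X ∈ u2 ↔ Xᴴ = -X :=
  skewAdjoint.mem_iff

theorem mem_mbar_iff {lam : ℝ} {X : Matrix (Fin 2) (Fin 2) ℂ} :
    X ∈ mbar lam ↔ X ∈ u2 ∧ (X 0 0).im + (X 1 1).im = lam * (X 0 0).im := by
  rw [mbar, Submodule.mem_span_triple, mem_u2_iff]
  constructor
  · rintro ⟨a, b, c, rfl⟩
    refine ⟨?_, by simp [mul_comm]⟩
    ext i j; fin_cases i <;> fin_cases j <;> simp [add_comm]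
  · rintro ⟨hX, hdiag⟩
    have h00 := congrFun₂ hX 0 0
    have h10 := congrFun₂ hX 1 0
    have h11 := congrFun₂ hX 1 1
    simp only [Fin.isValue, conjTranspose_apply, RCLike.star_def, Matrix.neg_apply, Complex.ext_iff,
      conj_re, neg_re, conj_im, neg_im, and_true, neg_inj] at h00 h10 h11
    refine ⟨(X 0 1).re, (X 0 1).im, (X 0 0).im, ?_⟩
    ext i j
    fin_cases i <;> fin_cases j <;> simp [Complex.ext_iff] <;> (try constructor) <;>
      linarith [h10.1, h10.2]

theorem mbar_le_u2 (lam : ℝ) : mbar lam ≤ u2 := fun _ hX => (mem_mbar_iff.mp hX).1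

theorem F_mem_u2 : F ∈ u2 := by
  rw [mem_u2_iff]; ext i j; fin_cases i <;> fin_cases j <;> simp

theorem mbar_inf_span_F (lam : ℝ) : mbar lam ⊓ (ℝ ∙ F) = ⊥ := by
  rw [eq_bot_iff]
  rintro X ⟨hX, hXF⟩
  obtain ⟨t, rfl⟩ := Submodule.mem_span_singleton.mp hXF
  have ht : t = 0 := by simpa using (mem_mbar_iff.mp hX).2
  simp [ht]

theorem mbar_sup_span_F (lam : ℝ) : mbar lam ⊔ (ℝ ∙ F) = u2 := by
  refine le_antisymm (sup_le (mbar_le_u2 lam) ((Submodule.span_singleton_le_iff_mem _ _).mpr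
    F_mem_u2)) fun X hX => ?_
  set t := (X 0 0).im + (X 1 1).im - lam * (X 0 0).im
  have hXt : X - t • F ∈ mbar lam :=
    mem_mbar_iff.mpr ⟨u2.sub_mem hX (u2.smul_mem t F_mem_u2), by simp [t]; ring⟩
  have htF : t • F ∈ ℝ ∙ F := Submodule.mem_span_singleton.mpr ⟨t, rfl⟩
  simpa using Submodule.add_mem_sup hXt htF

theorem diag_conj_mem_mbar {z : ℂ} (hz : ‖z‖ = 1) {lam : ℝ} {X : Matrix (Fin 2) (Fin 2) ℂ}
    (hX : X ∈ mbar lam) : !![1, 0; 0, z] * X * !![1, 0; 0, z]⁻¹ ∈ mbar lam := by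
  have hz0 : z ≠ 0 := by rintro rfl; simp at hz
  obtain ⟨hXu, hXdiag⟩ := mem_mbar_iff.mp hX
  refine mem_mbar_iff.mpr ⟨?_, by rw [diag_one_mul_mul_inv hz0]; simpa using hXdiag⟩
  have hstar : (!![1, 0; 0, z] : Matrix (Fin 2) (Fin 2) ℂ)⁻¹ = star !![1, 0; 0, z] := by
    rw [inv_diag_one hz0, Complex.inv_eq_conj hz]
    ext i j; fin_cases i <;> fin_cases j <;> simp
  rw [hstar]
  exact skewAdjoint.conjugate hXu _

theorem mbar_injective : Function.Injective mbar := by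
  intro mu lam h
  have hmem : E₃ + mu • F ∈ mbar lam := h ▸ Submodule.subset_span (by simp)
  simpa using (mem_mbar_iff.mp hmem).2

def IsReductiveComplement (m : Submodule ℝ (Matrix (Fin 2) (Fin 2) ℂ)) : Prop :=
  m ≤ u2 ∧ m ⊓ (ℝ ∙ F) = ⊥ ∧ m ⊔ (ℝ ∙ F) = u2 ∧
    ∀ z : ℂ, ‖z‖ = 1 → ∀ X ∈ m, !![1, 0; 0, z] * X * !![1, 0; 0, z]⁻¹ ∈ m

theorem isReductiveComplement_mbar (lam : ℝ) : IsReductiveComplement (mbar lam) :=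
  ⟨mbar_le_u2 lam, mbar_inf_span_F lam, mbar_sup_span_F lam,
    fun _ hz _ hX => diag_conj_mem_mbar hz hX⟩

theorem IsReductiveComplement.mem_of_diag_eq_zero {m : Submodule ℝ (Matrix (Fin 2) (Fin 2) ℂ)}
    (h : IsReductiveComplement m) {X : Matrix (Fin 2) (Fin 2) ℂ} (hX : X ∈ u2)
    (h0 : X 0 0 = 0) (h1 : X 1 1 = 0) : X ∈ m := by
  obtain ⟨-, hinf, hsup, hAd⟩ := h
  have hσ : (-1 : ℂ) ≠ 0 := by norm_num
  refine Submodule.mem_left_of_mem_sup_of_apply_eq_neg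
    (LinearMap.mulLeftRight ℝ (!![1, 0; 0, -1], !![1, 0; 0, -1]⁻¹))
    (fun Y hY => hAd (-1) (by simp) Y hY) ?_ hinf (hsup ▸ hX) ?_
  · intro Y hY
    obtain ⟨t, rfl⟩ := Submodule.mem_span_singleton.mp hY
    rw [map_smul, LinearMap.mulLeftRight_apply, diag_one_mul_mul_inv hσ]
    simp
  · rw [LinearMap.mulLeftRight_apply, diag_one_mul_mul_inv hσ]
    ext i j; fin_cases i <;> fin_cases j <;> simp [h0, h1]

theorem IsReductiveComplement.exists_eq_mbar {m : Submodule ℝ (Matrix (Fin 2) (Fin 2) ℂ)}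
    (h : IsReductiveComplement m) : ∃ lam, m = mbar lam := by
  obtain ⟨-, hinf, hsup, -⟩ := id h
  have hE₃ : E₃ ∈ m ⊔ (ℝ ∙ F) := hsup ▸ mbar_le_u2 0 (Submodule.subset_span (by simp))
  obtain ⟨Y, hY, _, hF, hYF⟩ := Submodule.mem_sup.mp hE₃
  obtain ⟨t, rfl⟩ := Submodule.mem_span_singleton.mp hF
  refine ⟨-t, (eq_of_le_of_inf_le_of_sup_le (z := ℝ ∙ F) ?_ ?_ ?_).symm⟩
  · rw [mbar, Submodule.span_le]
    rintro X (rfl | rfl | rfl)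
    · exact h.mem_of_diag_eq_zero (mbar_le_u2 0 (Submodule.subset_span (by simp))) rfl rfl
    · exact h.mem_of_diag_eq_zero (mbar_le_u2 0 (Submodule.subset_span (by simp))) rfl rfl
    · rwa [neg_smul, ← sub_eq_add_neg, ← hYF, add_sub_cancel_right]
  · rw [hinf]; exact bot_le
  · rw [hsup, mbar_sup_span_F]

/-- With `k̄ = ℝ·F`, `F = [[0,0],[0,i]]`, and
`K̄ = {[[1,0],[0,z]] : |z| = 1} ⊆ U(2)`, a real subspace `m′ ⊆ 𝔲(2)` satisfies
`𝔲(2) = m′ ⊕ k̄` and `k m′ k⁻¹ ⊆ m′` for all `k ∈ K̄` if and only if there is a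
(unique) `λ ∈ ℝ` with `m′ = span_ℝ{E₁, E₂, E₃ + λF}`, where
`E₁ = [[0,1],[−1,0]]`, `E₂ = [[0,i],[i,0]]`, `E₃ = [[i,0],[0,−i]]`. -/
theorem reductive_complements_in_u2 (m' : Submodule ℝ (Matrix (Fin 2) (Fin 2) ℂ)) :
    (m' ≤ u2 ∧
      m' ⊓ (ℝ ∙ (!![0, 0; 0, I] : Matrix (Fin 2) (Fin 2) ℂ)) = ⊥ ∧
      m' ⊔ (ℝ ∙ (!![0, 0; 0, I] : Matrix (Fin 2) (Fin 2) ℂ)) = u2 ∧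
      (∀ z : ℂ, ‖z‖ = 1 → ∀ X ∈ m',
        (!![1, 0; 0, z] : Matrix (Fin 2) (Fin 2) ℂ) * X * (!![1, 0; 0, z])⁻¹ ∈ m')) ↔
    ∃! lam : ℝ, m' = Submodule.span ℝ
      ({!![0, 1; -1, 0], !![0, I; I, 0],
        !![I, 0; 0, -I] + lam • !![0, 0; 0, I]} : Set (Matrix (Fin 2) (Fin 2) ℂ)) := by
  change IsReductiveComplement m' ↔ ∃! lam, m' = mbar lam
  constructor
  · intro h
    obtain ⟨lam, rfl⟩ := h.exists_eq_mbar
    exact ⟨lam, rfl, fun mu h => mbar_injective h.symm⟩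
  · rintro ⟨lam, rfl, -⟩
    exact isReductiveComplement_mbar lam
end

section
/- Let ℍ be the real quaternions, 𝔰𝔭(2) = {A ∈ M₂(ℍ) : A* = −A} the skew-adjoint 2×2 quaternionic matrices, and identify 𝔲(1) with ℝ, so V = 𝔰𝔭(2) ⊕ ℝ. Let K̄ = {(diag(z,q), z) : z ∈ U(1), q ∈ Sp(1)} act on V by (diag(z,q), z)•(A, s) = (diag(z,q) A diag(z,q)*, s), and let k̄ = {(diag(t i, b), t) : t ∈ ℝ, b ∈ Im ℍ} = span_ℝ{([[i,0],[0,0]],1), ([[0,0],[0,i]],0), ([[0,0],[0,j]],0), ([[0,0],[0,k]],0)}. Then a real subspace m′ ⊆ V satisfies V = m′ ⊕ k̄ together with K̄•m′ ⊆ m′ if and only if there exists a (unique) λ ∈ ℝ such that m′ = span_ℝ{ ([[0,1],[−1,0]],0), ((1+λ)[[i,0],[0,0]], λ), ([[0,i],[i,0]],0), ([[j,0],[0,0]],0), ([[0,j],[j,0]],0), ([[k,0],[0,0]],0), ([[0,k],[k,0]],0) }. In other words, the K̄-invariant complements of k̄ in 𝔰𝔭(2) ⊕ 𝔲(1) form the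 one-parameter family m̄_λ obtained as graphs of the equivariant maps φ_λ. -/
open scoped Quaternion

instance : StarModule ℝ ℍ[ℝ] where
  star_smul r a := by rw [Quaternion.star_smul]; norm_num

/-- The quaternion unit `i`. -/
def qI : ℍ[ℝ] := ⟨0, 1, 0, 0⟩
/-- The quaternion unit `j`. -/
def qJ : ℍ[ℝ] := ⟨0, 0, 1, 0⟩
/-- The quaternion unit `k`. -/
def qK : ℍ[ℝ] := ⟨0, 0, 0, 1⟩

/-- `V = 𝔰𝔭(2) ⊕ 𝔲(1)`: pairs `(A, s)` with `A` a skew-adjoint `2×2` quaternionic matrix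
and `s ∈ ℝ ≅ 𝔲(1)`, as a real submodule of `M₂(ℍ) × ℝ`. -/
def sp2u1 : Submodule ℝ (Matrix (Fin 2) (Fin 2) ℍ[ℝ] × ℝ) where
  carrier := {p | star p.1 = -p.1}
  zero_mem' := by simp
  add_mem' := by
    intro p q hp hq
    show star (p.1 + q.1) = -(p.1 + q.1)
    rw [star_add, hp, hq, neg_add]
  smul_mem' := by
    intro r p hp
    show star (r • p.1) = -(r • p.1)
    rw [star_smul, hp, star_trivial, smul_neg]

/-- `k̄`, the isotropy algebra of `(1,0) ∈ S⁷` in `𝔰𝔭(2) ⊕ 𝔲(1)`: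
`span_ℝ{([[i,0],[0,0]],1), ([[0,0],[0,i]],0), ([[0,0],[0,j]],0), ([[0,0],[0,k]],0)}`. -/
noncomputable def kbarSp : Submodule ℝ (Matrix (Fin 2) (Fin 2) ℍ[ℝ] × ℝ) :=
  Submodule.span ℝ
    ({(!![qI, 0; 0, 0], 1), (!![0, 0; 0, qI], 0), (!![0, 0; 0, qJ], 0), (!![0, 0; 0, qK], 0)} :
      Set (Matrix (Fin 2) (Fin 2) ℍ[ℝ] × ℝ))

/-!
Averaging over a few elements of `K̄` projects an invariant subspace `m'` onto isotypic pieces: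
with `(A, s)` it contains `(diag(0, A₁₁), 0)` (average over `diag(±1, 1)` and then over
`diag(1, u)`, `u ∈ {1, i, j, k}`) and `(diag(Im_i(A₀₀) i, 0), s)` (average further over
`diag(i, 1)`). The first element lies in `k̄`, so a complement has `A₁₁ = 0`. Splitting
`(diag(i, 0), 0) ∈ m' ⊕ k̄` and projecting the `m'`-part produces `((1 + λ) diag(i, 0), λ) ∈ m'`
for some `λ`; subtracting a multiple of it from the second element leaves an element of `m' ∩ k̄`,
which forces `λ Im_i(A₀₀) = (1 + λ) s`. Hence `m' ≤ m̄_λ`, and as `m̄_λ` is itself a complement of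
`k̄`, modularity of the lattice of submodules gives `m' = m̄_λ`.
-/

namespace Sp2U1

open Matrix Quaternion

abbrev V : Type := Matrix (Fin 2) (Fin 2) ℍ[ℝ] × ℝ

@[simp] lemma qI_re : qI.re = 0 := rfl
@[simp] lemma qI_imI : qI.imI = 1 := rfl
@[simp] lemma qI_imJ : qI.imJ = 0 := rfl
@[simp] lemma qI_imK : qI.imK = 0 := rfl
@[simp] lemma qJ_re : qJ.re = 0 := rfl
@[simp] lemma qJ_imI : qJ.imI = 0 := rfl
@[simp] lemma qJ_imJ : qJ.imJ = 1 := rfl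
@[simp] lemma qJ_imK : qJ.imK = 0 := rfl
@[simp] lemma qK_re : qK.re = 0 := rfl
@[simp] lemma qK_imI : qK.imI = 0 := rfl
@[simp] lemma qK_imJ : qK.imJ = 0 := rfl
@[simp] lemma qK_imK : qK.imK = 1 := rfl

lemma norm_eq_one_of_normSq_eq_one {x : ℍ[ℝ]} (h : normSq x = 1) : ‖x‖ = 1 := by
  rw [norm_eq_sqrt_real_inner, inner_self, h, Real.sqrt_one]

lemma norm_qI : ‖qI‖ = 1 := norm_eq_one_of_normSq_eq_one (by simp [normSq_def'])
lemma norm_qJ : ‖qJ‖ = 1 := norm_eq_one_of_normSq_eq_one (by simp [normSq_def'])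
lemma norm_qK : ‖qK‖ = 1 := norm_eq_one_of_normSq_eq_one (by simp [normSq_def'])

lemma add_qI_mul_mul_star (x : ℍ[ℝ]) :
    x + qI * x * star qI = (2 : ℝ) • ((x.re : ℍ[ℝ]) + x.imI • qI) := by
  ext <;> simp [re_mul, imI_mul, imJ_mul, imK_mul] <;> ring

lemma sum_units_mul_mul_star (x : ℍ[ℝ]) :
    x + qI * x * star qI + qJ * x * star qJ + qK * x * star qK = ((4 * x.re : ℝ) : ℍ[ℝ]) := by
  ext <;> simp [re_mul, imI_mul, imJ_mul, imK_mul]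
  ring

lemma imI_mul_mul_star_of_complex {z : ℍ[ℝ]} (hJ : z.imJ = 0) (hK : z.imK = 0) (hz : ‖z‖ = 1)
    (a : ℍ[ℝ]) : (z * a * star z).imI = a.imI := by
  have h : z.re ^ 2 + z.imI ^ 2 = 1 := by
    have := normSq_eq_norm_mul_self z
    rw [hz, normSq_def', hJ, hK] at this
    linarith
  simp only [imI_mul, re_mul, imJ_mul, imK_mul, re_star, imI_star, imJ_star, imK_star, hJ, hK]
  linear_combination a.imI * h

lemma eq_im_of_re_eq_zero {x : ℍ[ℝ]} (h : x.re = 0) :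
    x = x.imI • qI + x.imJ • qJ + x.imK • qK := by
  ext <;> simp [h]

lemma re_apply_self_of_mem_sp2u1 {p : V} (hp : p ∈ sp2u1) (i : Fin 2) : (p.1 i i).re = 0 :=
  Quaternion.star_eq_neg.1 <| by simpa [Matrix.star_apply] using congrFun (congrFun hp i) i

lemma kbarSp_le_sp2u1 : kbarSp ≤ sp2u1 := by
  refine Submodule.span_le.2 ?_
  rintro _ (rfl | rfl | rfl | rfl) <;>
    simp [sp2u1, star_eq_conjTranspose, ← Matrix.ext_iff]

lemma mem_kbarSp_iff {p : V} :
    p ∈ kbarSp ↔ p.1 0 1 = 0 ∧ p.1 1 0 = 0 ∧ p.1 0 0 = p.2 • qI ∧ (p.1 1 1).re = 0 := by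
  constructor
  · intro hp
    induction hp using Submodule.span_induction with
    | mem x hx => rcases hx with rfl | rfl | rfl | rfl <;> simp
    | zero => simp
    | add x y _ _ hx hy => simp_all [add_smul]
    | smul r x _ hx => simp_all [mul_smul]
  · rintro ⟨h01, h10, h00, h11⟩
    have hp : p = p.2 • ((!![qI, 0; 0, 0], 1) : V) + (p.1 1 1).imI • ((!![0, 0; 0, qI], 0) : V)
        + (p.1 1 1).imJ • ((!![0, 0; 0, qJ], 0) : V)
        + (p.1 1 1).imK • ((!![0, 0; 0, qK], 0) : V) := by
      refine Prod.ext (Matrix.ext fun i j => ?_) (by simp)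
      fin_cases i <;> fin_cases j <;> simp [h00, h01, h10, ← eq_im_of_re_eq_zero h11]
    rw [hp]
    refine add_mem (add_mem (add_mem ?_ ?_) ?_) ?_ <;>
      exact Submodule.smul_mem _ _ (Submodule.subset_span (by simp))

/-- The action of `(diag(z, q), z) ∈ K̄` on `V`. -/
noncomputable def conjDiag (z q : ℍ[ℝ]) (p : V) : V :=
  (!![z, 0; 0, q] * p.1 * star !![z, 0; 0, q], p.2)

@[simp] lemma conjDiag_snd (z q : ℍ[ℝ]) (p : V) : (conjDiag z q p).2 = p.2 := rfl

@[simp] lemma conjDiag_fst (z q : ℍ[ℝ]) (p : V) :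
    (conjDiag z q p).1 = !![z * p.1 0 0 * star z, z * p.1 0 1 * star q;
      q * p.1 1 0 * star z, q * p.1 1 1 * star q] := by
  have hstar : star !![z, 0; 0, q] = !![star z, 0; 0, star q] := by simp [← Matrix.ext_iff]
  rw [conjDiag, hstar, Matrix.eta_fin_two p.1]
  simp [mul_assoc]

lemma conjDiag_mem_sp2u1 {p : V} (hp : p ∈ sp2u1) (z q : ℍ[ℝ]) : conjDiag z q p ∈ sp2u1 := by
  have hp' : star p.1 = -p.1 := hp
  change star (_ * p.1 * _) = -(_ * p.1 * _)
  simp only [star_mul, star_star, hp', mul_neg, neg_mul, mul_assoc]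

def IsKbarInvariant (m : Submodule ℝ V) : Prop :=
  ∀ z q : ℍ[ℝ], z.imJ = 0 → z.imK = 0 → ‖z‖ = 1 → ‖q‖ = 1 → ∀ p ∈ m, conjDiag z q p ∈ m

namespace IsKbarInvariant

variable {m : Submodule ℝ V}

lemma diag_mem (hm : IsKbarInvariant m) {p : V} (hp : p ∈ m) :
    (!![p.1 0 0, 0; 0, p.1 1 1], p.2) ∈ m := by
  have hsum := m.add_mem hp (hm (-1) 1 (by simp) (by simp) (by simp) (by simp) _ hp)
  have : p + conjDiag (-1) 1 p = (2 : ℝ) • ((!![p.1 0 0, 0; 0, p.1 1 1], p.2) : V) := by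
    refine Prod.ext (Matrix.ext fun i j => ?_) (by simp [two_mul])
    fin_cases i <;> fin_cases j <;> simp [two_smul]
  rwa [this, Submodule.smul_mem_iff _ two_ne_zero] at hsum

lemma upper_mem (hm : IsKbarInvariant m) {a d : ℍ[ℝ]} {s : ℝ} (hd : d.re = 0)
    (h : (!![a, 0; 0, d], s) ∈ m) : (!![a, 0; 0, 0], s) ∈ m := by
  have hu : ∀ u : ℍ[ℝ], ‖u‖ = 1 → conjDiag 1 u (!![a, 0; 0, d], s) ∈ m := fun u hu =>
    hm 1 u (by simp) (by simp) (by simp) hu _ h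
  have hsum :=
    m.add_mem (m.add_mem (m.add_mem h (hu qI norm_qI)) (hu qJ norm_qJ)) (hu qK norm_qK)
  have : (!![a, 0; 0, d], s) + conjDiag 1 qI (!![a, 0; 0, d], s) +
      conjDiag 1 qJ (!![a, 0; 0, d], s) + conjDiag 1 qK (!![a, 0; 0, d], s) =
      (4 : ℝ) • ((!![a, 0; 0, 0], s) : V) := by
    have hd' := sum_units_mul_mul_star d
    have ha : a + a + a + a = (4 : ℝ) • a := by module
    have hs : s + s + s + s = 4 * s := by ring
    simp [Prod.ext_iff, Matrix.of_add_of, hd', hd, ha, hs]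
  rwa [this, Submodule.smul_mem_iff _ four_ne_zero] at hsum

lemma upper_imI_mem (hm : IsKbarInvariant m) {a : ℍ[ℝ]} {s : ℝ} (ha : a.re = 0)
    (h : (!![a, 0; 0, 0], s) ∈ m) : (!![a.imI • qI, 0; 0, 0], s) ∈ m := by
  have hsum := m.add_mem h (hm qI 1 rfl rfl norm_qI (by simp) _ h)
  have : (!![a, 0; 0, 0], s) + conjDiag qI 1 (!![a, 0; 0, 0], s) =
      (2 : ℝ) • ((!![a.imI • qI, 0; 0, 0], s) : V) := by
    simp [Prod.ext_iff, Matrix.of_add_of, add_qI_mul_mul_star, ha, two_smul]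
  rwa [this, Submodule.smul_mem_iff _ two_ne_zero] at hsum

lemma lower_right_mem (hm : IsKbarInvariant m) (hsk : m ≤ sp2u1) {p : V} (hp : p ∈ m) :
    ((!![0, 0; 0, p.1 1 1], 0) : V) ∈ m := by
  have hd := hm.diag_mem hp
  have hu := hm.upper_mem (re_apply_self_of_mem_sp2u1 (hsk hp) 1) hd
  have hdu : ((!![p.1 0 0, 0; 0, p.1 1 1], p.2) : V) - (!![p.1 0 0, 0; 0, 0], p.2) =
      (!![0, 0; 0, p.1 1 1], 0) :=
    Prod.ext (Matrix.ext fun i j => by fin_cases i <;> fin_cases j <;> simp) (sub_self _)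
  exact hdu ▸ sub_mem hd hu

lemma upper_imI_mem_of_mem (hm : IsKbarInvariant m) (hsk : m ≤ sp2u1) {p : V} (hp : p ∈ m) :
    ((!![(p.1 0 0).imI • qI, 0; 0, 0], p.2) : V) ∈ m :=
  hm.upper_imI_mem (re_apply_self_of_mem_sp2u1 (hsk hp) 0)
    (hm.upper_mem (re_apply_self_of_mem_sp2u1 (hsk hp) 1) (hm.diag_mem hp))

end IsKbarInvariant

def mbar (lam : ℝ) : Submodule ℝ V where
  carrier := {p | p ∈ sp2u1 ∧ p.1 1 1 = 0 ∧ lam * (p.1 0 0).imI = (1 + lam) * p.2}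
  zero_mem' := ⟨zero_mem _, rfl, by simp⟩
  add_mem' := by
    rintro p q ⟨hp, hp11, hp00⟩ ⟨hq, hq11, hq00⟩
    refine ⟨add_mem hp hq, by simp [hp11, hq11], ?_⟩
    simp only [Prod.fst_add, Prod.snd_add, Matrix.add_apply, imI_add]
    linear_combination hp00 + hq00
  smul_mem' := by
    rintro r p ⟨hp, hp11, hp00⟩
    refine ⟨Submodule.smul_mem _ r hp, by simp [hp11], ?_⟩
    simp only [Prod.smul_fst, Prod.smul_snd, Matrix.smul_apply, imI_smul, smul_eq_mul]
    linear_combination r * hp00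

noncomputable def mbarGen (lam : ℝ) : V := ((1 + lam) • !![qI, 0; 0, 0], lam)

lemma mbar_le_sp2u1 (lam : ℝ) : mbar lam ≤ sp2u1 := fun _ hp => hp.1

lemma mbarGen_mem_mbar_iff {lam mu : ℝ} : mbarGen mu ∈ mbar lam ↔ lam = mu := by
  have hsk : mbarGen mu ∈ sp2u1 := by
    simp [mbarGen, sp2u1, star_eq_conjTranspose, ← Matrix.ext_iff]
  have h11 : (mbarGen mu).1 1 1 = 0 := by simp [mbarGen]
  have h00 : ((mbarGen mu).1 0 0).imI = 1 + mu := by simp [mbarGen]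
  change mbarGen mu ∈ sp2u1 ∧ (mbarGen mu).1 1 1 = 0 ∧
    lam * ((mbarGen mu).1 0 0).imI = (1 + lam) * mu ↔ _
  rw [h00]
  simp only [hsk, h11, true_and]
  constructor <;> intro h <;> linear_combination h

lemma mbar_injective : Function.Injective mbar := fun _ _ h =>
  mbarGen_mem_mbar_iff.1 (h ▸ mbarGen_mem_mbar_iff.2 rfl)

lemma mbar_eq_span (lam : ℝ) : mbar lam = Submodule.span ℝ
      ({(!![0, 1; -1, 0], 0),
        ((1 + lam) • !![qI, 0; 0, 0], lam),
        (!![0, qI; qI, 0], 0),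
        (!![qJ, 0; 0, 0], 0),
        (!![0, qJ; qJ, 0], 0),
        (!![qK, 0; 0, 0], 0),
        (!![0, qK; qK, 0], 0)} : Set V) := by
  refine le_antisymm ?_ (Submodule.span_le.2 ?_)
  · rintro ⟨A, s⟩ ⟨hskew, h11, hrel⟩
    have h00 := re_apply_self_of_mem_sp2u1 hskew 0
    have h10 : A 1 0 = -star (A 0 1) := by
      have : star (A 0 1) = -A 1 0 := by
        simpa [Matrix.star_apply] using congrFun (congrFun hskew 1) 0
      rw [this, neg_neg]
    rw [Matrix.eta_fin_two A]
    dsimp only at h11 hrel h00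
    have hp : ((!![A 0 0, A 0 1; A 1 0, A 1 1], s) : V) =
        (A 0 1).re • ((!![0, 1; -1, 0], 0) : V)
        + ((A 0 0).imI - s) • (((1 + lam) • !![qI, 0; 0, 0], lam) : V)
        + (A 0 1).imI • ((!![0, qI; qI, 0], 0) : V)
        + (A 0 0).imJ • ((!![qJ, 0; 0, 0], 0) : V)
        + (A 0 1).imJ • ((!![0, qJ; qJ, 0], 0) : V)
        + (A 0 0).imK • ((!![qK, 0; 0, 0], 0) : V)
        + (A 0 1).imK • ((!![0, qK; qK, 0], 0) : V) := by
      simp only [h10, h11, Prod.smul_mk, smul_of, smul_cons, smul_zero, smul_empty, smul_neg,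
        smul_eq_mul, mul_zero, Prod.mk_add_mk, of_add_of, add_cons, head_cons, zero_add, tail_cons,
        add_zero, empty_add_empty, Prod.mk.injEq, EmbeddingLike.apply_eq_iff_eq, vecCons_inj,
        and_true]
      refine ⟨⟨⟨?_, by ext <;> simp⟩, by ext <;> simp⟩, by linear_combination -hrel⟩
      ext <;> simp [h00]
      linear_combination -hrel
    rw [hp]
    refine add_mem (add_mem (add_mem (add_mem (add_mem (add_mem ?_ ?_) ?_) ?_) ?_) ?_) ?_ <;>
      exact Submodule.smul_mem _ _ (Submodule.subset_span (by simp))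
  · rintro _ (rfl | rfl | rfl | rfl | rfl | rfl | rfl) <;>
      refine ⟨?_, by simp, by simp [mul_comm]⟩ <;>
      simp [sp2u1, star_eq_conjTranspose, ← Matrix.ext_iff]

lemma disjoint_mbar_kbarSp (lam : ℝ) : Disjoint (mbar lam) kbarSp := by
  refine Submodule.disjoint_def.2 fun p ⟨_, h11, hrel⟩ hk => ?_
  obtain ⟨h01, h10, h00, -⟩ := mem_kbarSp_iff.1 hk
  have hs : p.2 = 0 := by
    rw [h00] at hrel
    simp only [imI_smul, qI_imI, smul_eq_mul, mul_one] at hrel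
    linear_combination -hrel
  refine Prod.ext (Matrix.ext fun i j => ?_) hs
  fin_cases i <;> fin_cases j <;> simp [h00, h01, h10, h11, hs]

lemma mbar_sup_kbarSp (lam : ℝ) : mbar lam ⊔ kbarSp = sp2u1 := by
  refine le_antisymm (sup_le (mbar_le_sp2u1 lam) kbarSp_le_sp2u1) fun p hp => ?_
  set c := p.2 - lam * ((p.1 0 0).imI - p.2)
  set k : V := (!![c • qI, 0; 0, p.1 1 1], c)
  have hk : k ∈ kbarSp := mem_kbarSp_iff.2 ⟨rfl, rfl, rfl, re_apply_self_of_mem_sp2u1 hp 1⟩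
  have hk00 : (k.1 0 0).imI = c := by simp [k]
  have hpk : p - k ∈ mbar lam := by
    refine ⟨sub_mem hp (kbarSp_le_sp2u1 hk), by simp [k], ?_⟩
    simp only [Prod.fst_sub, Prod.snd_sub, Matrix.sub_apply, imI_sub, hk00, c]
    ring
  simpa using Submodule.add_mem_sup hpk hk

lemma isKbarInvariant_mbar (lam : ℝ) : IsKbarInvariant (mbar lam) := by
  rintro z q hJ hK hz - p ⟨hp, h11, hrel⟩
  refine ⟨conjDiag_mem_sp2u1 hp z q, by simp [h11], ?_⟩
  simpa [imI_mul_mul_star_of_complex hJ hK hz] using hrel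

namespace IsKbarInvariant

variable {m : Submodule ℝ V}

lemma apply_one_one_eq_zero (hm : IsKbarInvariant m) (hsk : m ≤ sp2u1)
    (hdisj : Disjoint m kbarSp) {p : V} (hp : p ∈ m) : p.1 1 1 = 0 := by
  have hk : ((!![0, 0; 0, p.1 1 1], 0) : V) ∈ kbarSp :=
    mem_kbarSp_iff.2 ⟨rfl, rfl, by simp, re_apply_self_of_mem_sp2u1 (hsk hp) 1⟩
  simpa using congrArg (fun x : V => x.1 1 1)
    (Submodule.disjoint_def.1 hdisj _ (hm.lower_right_mem hsk hp) hk)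

lemma exists_mbarGen_mem (hm : IsKbarInvariant m) (hsk : m ≤ sp2u1)
    (hsup : m ⊔ kbarSp = sp2u1) : ∃ lam : ℝ, mbarGen lam ∈ m := by
  have he : ((!![qI, 0; 0, 0], 0) : V) ∈ m ⊔ kbarSp :=
    hsup ▸ by simp [sp2u1, star_eq_conjTranspose, ← Matrix.ext_iff]
  obtain ⟨y, hy, k, hk, hyk⟩ := Submodule.mem_sup.1 he
  obtain ⟨-, -, hk00, -⟩ := mem_kbarSp_iff.1 hk
  have hy00 : y.1 0 0 = qI - k.2 • qI := by
    rw [← hk00, eq_sub_iff_add_eq]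
    simpa using congrArg (fun x : V => x.1 0 0) hyk
  have hy2 : y.2 = -k.2 := eq_neg_of_add_eq_zero_left (congrArg Prod.snd hyk)
  refine ⟨y.2, ?_⟩
  rw [mbarGen]
  convert hm.upper_imI_mem_of_mem hsk hy using 2
  simp [hy00, hy2, Matrix.smul_of, ← sub_eq_add_neg]

lemma le_mbar (hm : IsKbarInvariant m) (hsk : m ≤ sp2u1) (hdisj : Disjoint m kbarSp) {lam : ℝ}
    (hlam : mbarGen lam ∈ m) : m ≤ mbar lam := by
  intro p hp
  refine ⟨hsk hp, hm.apply_one_one_eq_zero hsk hdisj hp, ?_⟩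
  set a := (p.1 0 0).imI
  have hw := sub_mem (hm.upper_imI_mem_of_mem hsk hp) (m.smul_mem (a - p.2) hlam)
  have hk : ((!![a • qI, 0; 0, 0], p.2) : V) - (a - p.2) • mbarGen lam ∈ kbarSp := by
    refine mem_kbarSp_iff.2 ⟨by simp [mbarGen], by simp [mbarGen], ?_, by simp [mbarGen]⟩
    simp only [mbarGen, Prod.fst_sub, Prod.smul_fst, Prod.snd_sub, Prod.smul_snd,
      Matrix.sub_apply, Matrix.smul_apply, Matrix.of_apply, Matrix.cons_val',
      Matrix.cons_val_zero, Matrix.cons_val_fin_one, smul_eq_mul]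
    module
  have := congrArg Prod.snd (Submodule.disjoint_def.1 hdisj _ hw hk)
  simp only [mbarGen, Prod.snd_sub, Prod.smul_snd, smul_eq_mul, Prod.snd_zero] at this
  linear_combination -this

lemma exists_eq_mbar (hm : IsKbarInvariant m) (hsk : m ≤ sp2u1) (hdisj : Disjoint m kbarSp)
    (hsup : m ⊔ kbarSp = sp2u1) : ∃ lam : ℝ, m = mbar lam := by
  obtain ⟨lam, hlam⟩ := hm.exists_mbarGen_mem hsk hsup
  exact ⟨lam, eq_of_le_of_inf_le_of_le_sup (hm.le_mbar hsk hdisj hlam)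
    ((disjoint_mbar_kbarSp lam).eq_bot ▸ bot_le) (hsup ▸ mbar_le_sp2u1 lam)⟩

end IsKbarInvariant

end Sp2U1

open Sp2U1 in
/-- With `K̄ = {(diag(z,q), z) : z ∈ U(1), q ∈ Sp(1)}` acting on
`V = 𝔰𝔭(2) ⊕ 𝔲(1)` by `(diag(z,q), z) • (A, s) = (diag(z,q) A diag(z,q)*, s)`, a real
subspace `m′ ⊆ V` is a `K̄`-invariant complement of `k̄` if and only if there exists a
(unique) `λ ∈ ℝ` with
`m′ = span_ℝ{([[0,1],[−1,0]],0), ((1+λ)[[i,0],[0,0]], λ), ([[0,i],[i,0]],0),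
([[j,0],[0,0]],0), ([[0,j],[j,0]],0), ([[k,0],[0,0]],0), ([[0,k],[k,0]],0)}`. -/
theorem reductive_complements_in_sp2u1
    (m' : Submodule ℝ (Matrix (Fin 2) (Fin 2) ℍ[ℝ] × ℝ)) :
    (m' ≤ sp2u1 ∧ m' ⊓ kbarSp = ⊥ ∧ m' ⊔ kbarSp = sp2u1 ∧
      ∀ z q : ℍ[ℝ], z.imJ = 0 → z.imK = 0 → ‖z‖ = 1 → ‖q‖ = 1 →
        ∀ p ∈ m',
          ((!![z, 0; 0, q] : Matrix (Fin 2) (Fin 2) ℍ[ℝ]) * p.1 * star !![z, 0; 0, q], p.2)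
            ∈ m') ↔
    ∃! lam : ℝ, m' = Submodule.span ℝ
      ({(!![0, 1; -1, 0], 0),
        ((1 + lam) • !![qI, 0; 0, 0], lam),
        (!![0, qI; qI, 0], 0),
        (!![qJ, 0; 0, 0], 0),
        (!![0, qJ; qJ, 0], 0),
        (!![qK, 0; 0, 0], 0),
        (!![0, qK; qK, 0], 0)} : Set (Matrix (Fin 2) (Fin 2) ℍ[ℝ] × ℝ)) := by
  constructor
  · rintro ⟨hsk, hinf, hsup, hm⟩
    obtain ⟨lam, rfl⟩ := IsKbarInvariant.exists_eq_mbar hm hsk (disjoint_iff.2 hinf) hsup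
    exact ⟨lam, mbar_eq_span lam, fun mu hmu => mbar_injective (by rw [mbar_eq_span, ← hmu])⟩
  · rintro ⟨lam, hm, -⟩
    rw [← mbar_eq_span] at hm
    subst hm
    exact ⟨mbar_le_sp2u1 lam, (disjoint_mbar_kbarSp lam).eq_bot, mbar_sup_kbarSp lam,
      isKbarInvariant_mbar lam⟩
end

section
/- Consider the action of the product group Sp(2) × U(1) on ℍ² given by (A, z)•(q₁, q₂) = A·(q₁ \bar{z}, q₂ \bar{z})ᵀ, where A ∈ Sp(2) acts by matrix multiplication on the left and \bar{z} multiplies each quaternionic entry on the right. Then this action preserves the unit sphere S⁷ = {(q₁,q₂) ∈ ℍ² : |q₁|² + |q₂|² = 1}, and the set of pairs (A, z) ∈ Sp(2) × U(1) acting as the identity on S⁷ is exactly {(I₂, 1), (−I₂, −1)}. Hence the quotient Sp(2)U(1) = (Sp(2) × U(1))/{±(I₂,1)} acts effectively on S⁷. -/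
/-!
Since `A` is quaternionic unitary and `|z| = 1`, both `A` and right multiplication by `z̄`
preserve `|q₁|² + |q₂|²`. If `(A, z)` fixes `S⁷` pointwise, testing on `(w, 0)` and `(0, w)`
for unit quaternions `w` gives `A e_j = e_j z` and `z w z̄ = w`. So `A = z I₂` with `z` in
the centre `ℝ` of `ℍ`, and `|z| = 1` leaves `z = ±1`.
-/

open scoped Quaternion

/-- The action of `Sp(2) × U(1)` on `ℍ²`:
`(A, z) • (q₁, q₂) = A · (q₁ z̄, q₂ z̄)ᵀ`, with `z̄ = star z`. -/
noncomputable def sp2u1Act (A : Matrix (Fin 2) (Fin 2) ℍ[ℝ]) (z : ℍ[ℝ])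
    (q : Fin 2 → ℍ[ℝ]) : Fin 2 → ℍ[ℝ] :=
  A.mulVec fun i => q i * star z

open Matrix Quaternion

theorem Matrix.star_mulVec_dotProduct_mulVec_of_mem_unitary {n R : Type*} [Fintype n]
    [DecidableEq n] [Semiring R] [StarRing R] {A : Matrix n n R}
    (hA : A ∈ unitary (Matrix n n R)) (v : n → R) :
    star (A *ᵥ v) ⬝ᵥ A *ᵥ v = star v ⬝ᵥ v := by
  rw [star_mulVec, ← dotProduct_mulVec, mulVec_mulVec, ← star_eq_conjTranspose,
    Unitary.star_mul_self_of_mem hA, one_mulVec]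

namespace Quaternion

theorem mul_star_eq_one_of_norm_eq_one {z : ℍ[ℝ]} (hz : ‖z‖ = 1) : z * star z = 1 := by
  rw [self_mul_star, normSq_eq_norm_mul_self, hz, mul_one, coe_one]

theorem star_mul_eq_one_of_norm_eq_one {z : ℍ[ℝ]} (hz : ‖z‖ = 1) : star z * z = 1 := by
  rw [star_mul_self, normSq_eq_norm_mul_self, hz, mul_one, coe_one]

theorem coe_sum_norm_sq {n : Type*} [Fintype n] (v : n → ℍ[ℝ]) :
    ((∑ i, ‖v i‖ ^ 2 : ℝ) : ℍ[ℝ]) = star v ⬝ᵥ v := by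
  simp only [dotProduct, Pi.star_apply, star_mul_self, normSq_eq_norm_mul_self, ← sq]
  exact map_sum (algebraMap ℝ ℍ[ℝ]) _ _

-- Commuting with `i` kills `imJ` and `imK`, commuting with `j` kills `imI`. The `set`s keep
-- `i` and `j` typed as `ℍ[ℝ]` rather than `QuaternionAlgebra`, so that `imK_mul` applies.
theorem eq_coe_re_of_forall_commute {z : ℍ[ℝ]} (h : ∀ w : ℍ[ℝ], ‖w‖ = 1 → Commute z w) :
    z = z.re := by
  have norm_eq_one {w : ℍ[ℝ]} (hw : normSq w = 1) : ‖w‖ = 1 := by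
    rwa [← pow_eq_one_iff_of_nonneg (norm_nonneg w) two_ne_zero, sq, ← normSq_eq_norm_mul_self]
  set i : ℍ[ℝ] := ⟨0, 1, 0, 0⟩ with hi
  set j : ℍ[ℝ] := ⟨0, 0, 1, 0⟩ with hj
  have hzi := (h i (norm_eq_one (by rw [normSq_def']; simp [hi]))).eq
  have hzj := (h j (norm_eq_one (by rw [normSq_def']; simp [hj]))).eq
  have hzi_J := congrArg QuaternionAlgebra.imJ hzi
  have hzi_K := congrArg QuaternionAlgebra.imK hzi
  have hzj_K := congrArg QuaternionAlgebra.imK hzj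
  rw [imJ_mul, imJ_mul] at hzi_J
  rw [imK_mul, imK_mul] at hzi_K hzj_K
  simp only [hi, hj, mul_zero, sub_self, add_zero, mul_one, zero_add, zero_mul, one_mul, zero_sub,
    sub_zero] at hzi_J hzi_K hzj_K
  ext <;> simp only [re_coe, imI_coe, imJ_coe, imK_coe] <;> linarith

theorem coe_eq_one_or_eq_neg_one {r : ℝ} (h : ‖(r : ℍ[ℝ])‖ = 1) :
    (r : ℍ[ℝ]) = 1 ∨ (r : ℍ[ℝ]) = -1 := by
  rw [norm_coe, Real.norm_eq_abs] at h
  rcases (abs_eq zero_le_one).mp h with rfl | rfl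
  · exact .inl coe_one
  · exact .inr (by rw [coe_neg, coe_one])

end Quaternion

theorem sum_norm_sq_mulVec_of_mem_unitary {n : Type*} [Fintype n] [DecidableEq n]
    {A : Matrix n n ℍ[ℝ]} (hA : A ∈ unitary (Matrix n n ℍ[ℝ])) (v : n → ℍ[ℝ]) :
    ∑ i, ‖(A *ᵥ v) i‖ ^ 2 = ∑ i, ‖v i‖ ^ 2 := by
  apply coe_injective
  rw [coe_sum_norm_sq, star_mulVec_dotProduct_mulVec_of_mem_unitary hA, coe_sum_norm_sq]

theorem sum_norm_sq_sp2u1Act {A : Matrix (Fin 2) (Fin 2) ℍ[ℝ]}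
    (hA : A ∈ unitary (Matrix (Fin 2) (Fin 2) ℍ[ℝ])) {z : ℍ[ℝ]} (hz : ‖z‖ = 1)
    (q : Fin 2 → ℍ[ℝ]) : ∑ i, ‖sp2u1Act A z q i‖ ^ 2 = ∑ i, ‖q i‖ ^ 2 := by
  rw [sp2u1Act, sum_norm_sq_mulVec_of_mem_unitary hA]
  simp only [norm_mul, norm_star, hz, mul_one]

theorem sp2u1Act_single (A : Matrix (Fin 2) (Fin 2) ℍ[ℝ]) (z : ℍ[ℝ]) (j : Fin 2) (w : ℍ[ℝ])
    (i : Fin 2) : sp2u1Act A z (Pi.single j w) i = A i j * (w * star z) := by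
  have : (fun k => (Pi.single j w : Fin 2 → ℍ[ℝ]) k * star z) = Pi.single j (w * star z) := by
    ext k : 1
    exact (Pi.single_mul_left_apply j k w (fun _ => star z)).symm
  rw [sp2u1Act, this, mulVec_single]
  rfl

theorem sp2u1Act_one_one (q : Fin 2 → ℍ[ℝ]) : sp2u1Act 1 1 q = q := by
  simp only [sp2u1Act, star_one, mul_one, one_mulVec]

theorem sp2u1Act_neg_one_neg_one (q : Fin 2 → ℍ[ℝ]) : sp2u1Act (-1) (-1) q = q := by
  ext i : 1
  simp [sp2u1Act, neg_mulVec]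

section FixedOnSphere

variable {A : Matrix (Fin 2) (Fin 2) ℍ[ℝ]} {z : ℍ[ℝ]}

theorem mul_mul_star_eq_single_of_forall_sp2u1Act_eq_self
    (hfix : ∀ q : Fin 2 → ℍ[ℝ], ‖q 0‖ ^ 2 + ‖q 1‖ ^ 2 = 1 → sp2u1Act A z q = q)
    {w : ℍ[ℝ]} (hw : ‖w‖ = 1) (i j : Fin 2) :
    A i j * (w * star z) = (Pi.single j w : Fin 2 → ℍ[ℝ]) i := by
  set q : Fin 2 → ℍ[ℝ] := Pi.single j w
  have hq : ‖q 0‖ ^ 2 + ‖q 1‖ ^ 2 = 1 := by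
    fin_cases j <;> simp [q, hw]
  rw [← sp2u1Act_single, hfix q hq]

theorem eq_diagonal_of_forall_sp2u1Act_eq_self
    (hfix : ∀ q : Fin 2 → ℍ[ℝ], ‖q 0‖ ^ 2 + ‖q 1‖ ^ 2 = 1 → sp2u1Act A z q = q)
    (hz : ‖z‖ = 1) : A = diagonal fun _ => z := by
  ext i j : 1
  have := mul_mul_star_eq_single_of_forall_sp2u1Act_eq_self hfix hz i j
  rw [diagonal_apply]
  rwa [mul_star_eq_one_of_norm_eq_one hz, mul_one, Pi.single_apply] at this

theorem commute_of_forall_sp2u1Act_eq_self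
    (hfix : ∀ q : Fin 2 → ℍ[ℝ], ‖q 0‖ ^ 2 + ‖q 1‖ ^ 2 = 1 → sp2u1Act A z q = q)
    (hz : ‖z‖ = 1) {w : ℍ[ℝ]} (hw : ‖w‖ = 1) : Commute z w := by
  have h := mul_mul_star_eq_single_of_forall_sp2u1Act_eq_self hfix hw 0 0
  rw [eq_diagonal_of_forall_sp2u1Act_eq_self hfix hz, diagonal_apply_eq, Pi.single_eq_same,
    ← mul_assoc] at h
  calc z * w = z * w * (star z * z) := by rw [star_mul_eq_one_of_norm_eq_one hz, mul_one]
    _ = w * z := by rw [← mul_assoc, h]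

theorem forall_sp2u1Act_eq_self_iff (hz : ‖z‖ = 1) :
    (∀ q : Fin 2 → ℍ[ℝ], ‖q 0‖ ^ 2 + ‖q 1‖ ^ 2 = 1 → sp2u1Act A z q = q) ↔
      (A = 1 ∧ z = 1) ∨ (A = -1 ∧ z = -1) := by
  constructor
  · intro hfix
    have hA := eq_diagonal_of_forall_sp2u1Act_eq_self hfix hz
    have hz_re := eq_coe_re_of_forall_commute fun _ ↦ commute_of_forall_sp2u1Act_eq_self hfix hz
    rw [hz_re] at hz hA ⊢
    rcases coe_eq_one_or_eq_neg_one hz with h | h <;> rw [h] at hA ⊢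
    · exact .inl ⟨by rw [hA, diagonal_one], rfl⟩
    · exact .inr ⟨by rw [hA, ← diagonal_one, diagonal_neg], rfl⟩
  · rintro (⟨rfl, rfl⟩ | ⟨rfl, rfl⟩) q _
    · exact sp2u1Act_one_one q
    · exact sp2u1Act_neg_one_neg_one q

end FixedOnSphere

/-- The action `(A, z) • (q₁, q₂) = A (q₁ z̄, q₂ z̄)ᵀ` of
`Sp(2) × U(1)` on `ℍ²` preserves the unit sphere `S⁷`, and the pairs `(A, z)` acting
as the identity on `S⁷` are exactly `(I₂, 1)` and `(−I₂, −1)`.  (Hence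
`Sp(2)U(1) = (Sp(2) × U(1))/{±(I₂,1)}` acts effectively on `S⁷`.) -/
theorem sp2u1_action_preserves_sphere_and_kernel :
    (∀ A ∈ unitary (Matrix (Fin 2) (Fin 2) ℍ[ℝ]),
      ∀ z : ℍ[ℝ], z.imJ = 0 → z.imK = 0 → ‖z‖ = 1 →
        ∀ q : Fin 2 → ℍ[ℝ], ‖q 0‖ ^ 2 + ‖q 1‖ ^ 2 = 1 →
          ‖sp2u1Act A z q 0‖ ^ 2 + ‖sp2u1Act A z q 1‖ ^ 2 = 1) ∧
    (∀ A ∈ unitary (Matrix (Fin 2) (Fin 2) ℍ[ℝ]),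
      ∀ z : ℍ[ℝ], z.imJ = 0 → z.imK = 0 → ‖z‖ = 1 →
        ((∀ q : Fin 2 → ℍ[ℝ], ‖q 0‖ ^ 2 + ‖q 1‖ ^ 2 = 1 → sp2u1Act A z q = q) ↔
          (A = 1 ∧ z = 1) ∨ (A = -1 ∧ z = -1))) := by
  refine ⟨fun A hA z _ _ hz q hq ↦ ?_, fun A _ z _ _ hz ↦ forall_sp2u1Act_eq_self_iff hz⟩
  simpa only [Fin.sum_univ_two, hq] using sum_norm_sq_sp2u1Act hA hz q
end
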